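/- arXiv:2112.12225 — 2 statements merged into one kernel-verified Lean document; each statement's English description precedes it below -/
import Mathlib

section
/- Let p ∈ (1,2], δ ∈ [0,∞) and A ≥ 1, and set ω := ω_{p,δ}. Then the A-approximation ω^A is a balanced N-function with characteristics (p−1, 1), i.e. (p−1)·(ω^A)'(t) ≤ t·(ω^A)''(t) ≤ (ω^A)'(t) for all t > 0. -/
open Real Set MeasureTheory Filter Matrix

noncomputable section

/-- The N-function `omega_{p,delta}(t) = int_0^t (delta+s)^(p-2) s ds`. -/
def omg (p δ : ℝ) (t : ℝ) : ℝ := ∫ s in (0:ℝ)..t, (δ + s) ^ (p - 2) * s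

/-- The `A`-approximation of a function `φ`: it equals `φ` on `[0,A]` and is the
second-order Taylor polynomial of `φ` at `A` for `t > A`. -/
def approxA (φ : ℝ → ℝ) (A : ℝ) (t : ℝ) : ℝ :=
  if t ≤ A then φ t
  else (1/2) * deriv (deriv φ) A * t ^ 2 + (deriv φ A - deriv (deriv φ) A * A) * t
    + (φ A - deriv φ A * A + (1/2) * deriv (deriv φ) A * A ^ 2)

/-- `φ` is a regular N-function: continuous, convex, positive for `t > 0`,
`φ(t)/t → 0` as `t → 0⁺`, `φ(t)/t → ∞` as `t → ∞`, `C¹` on `[0,∞)`, `C²` on `(0,∞)`,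
with `φ'' > 0` on `(0,∞)`. -/
structure IsRegularNFunction (φ : ℝ → ℝ) : Prop where
  continuousOn : ContinuousOn φ (Set.Ici 0)
  convexOn : ConvexOn ℝ (Set.Ici 0) φ
  pos : ∀ t : ℝ, 0 < t → 0 < φ t
  tendsto_zero : Filter.Tendsto (fun t => φ t / t) (nhdsWithin 0 (Set.Ioi 0)) (nhds 0)
  tendsto_atTop : Filter.Tendsto (fun t => φ t / t) Filter.atTop Filter.atTop
  diffAt : ∀ t : ℝ, 0 < t → DifferentiableAt ℝ φ t
  deriv_continuousOn : ContinuousOn (deriv φ) (Set.Ici 0)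
  diffAt2 : ∀ t : ℝ, 0 < t → DifferentiableAt ℝ (deriv φ) t
  deriv2_continuousOn : ContinuousOn (deriv (deriv φ)) (Set.Ioi 0)
  deriv2_pos : ∀ t : ℝ, 0 < t → 0 < deriv (deriv φ) t

/-- `φ` is a balanced N-function with characteristics `(γ₁, γ₂)`:
`γ₁ φ'(t) ≤ t φ''(t) ≤ γ₂ φ'(t)` for all `t > 0`. -/
structure IsBalanced (φ : ℝ → ℝ) (γ₁ γ₂ : ℝ) : Prop where
  regular : IsRegularNFunction φ
  gamma1_mem : γ₁ ∈ Set.Ioc (0:ℝ) 1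
  gamma2_ge : 1 ≤ γ₂
  lower : ∀ t : ℝ, 0 < t → γ₁ * deriv φ t ≤ t * deriv (deriv φ) t
  upper : ∀ t : ℝ, 0 < t → t * deriv (deriv φ) t ≤ γ₂ * deriv φ t

/-- `ψ` satisfies the Δ₂-condition with constant `K`. -/
def SatisfiesDelta2 (ψ : ℝ → ℝ) (K : ℝ) : Prop :=
  2 ≤ K ∧ ∀ t : ℝ, 0 ≤ t → ψ (2 * t) ≤ K * ψ t

/-- The complementary N-function `φ*(t) = ∫₀ᵗ (φ')⁻¹(s) ds`, where `(φ')⁻¹` is the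
inverse on `[0,∞)` of the (strictly increasing) derivative `φ'`. -/
def conj (φ : ℝ → ℝ) (t : ℝ) : ℝ :=
  ∫ s in (0:ℝ)..t, Function.invFunOn (deriv φ) (Set.Ici 0) s
/-! On `[0, A]` the approximation is `ω` itself and beyond `A` it is the second-order Taylor
polynomial of `ω` at `A`; so `(ω^A)'` is `ω'` continued by its tangent line at `A`, and
`(ω^A)''(t) = ω''(min t A)`. For `ω'(t) = (δ+t)^(p-2) t` the balance inequalities
`(p-1) ω' ≤ t ω'' ≤ ω'` are a direct computation, and they survive the affine continuation
because `p - 1 ≤ 1` and `ω''(A) ≥ 0`. The other N-function properties only use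
`ω(0) = ω'(0) = 0` and `ω'' > 0`. -/

open Topology

lemma hasDerivAt_ite_le {E : Type*} [NormedAddCommGroup E] [NormedSpace ℝ E] {u v : ℝ → E}
    {u' v' : E} {a t : ℝ} (hu : HasDerivAt u u' t)
    (hv : HasDerivAt v v' t) (hua : u a = v a) (hd : t = a → u' = v') :
    HasDerivAt (fun x => if x ≤ a then u x else v x) (if t ≤ a then u' else v') t := by
  rcases lt_trichotomy t a with h | rfl | h
  · rw [if_pos h.le]
    exact hu.congr_of_eventuallyEq <| by
      filter_upwards [Iio_mem_nhds h] with x hx using if_pos hx.le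
  · rw [if_pos le_rfl]
    have hl : HasDerivWithinAt (fun x => if x ≤ t then u x else v x) u' (Iic t) t :=
      hu.hasDerivWithinAt.congr (fun x hx => if_pos hx) (if_pos le_rfl)
    have hr : HasDerivWithinAt (fun x => if x ≤ t then u x else v x) u' (Ici t) t := by
      rw [hd rfl]
      refine hv.hasDerivWithinAt.congr (fun x hx => ?_) (by simp [hua])
      rcases (mem_Ici.mp hx).eq_or_lt with rfl | hx
      · simp [hua]
      · exact if_neg hx.not_ge
    simpa only [Iic_union_Ici, hasDerivWithinAt_univ] using hl.union hr
  · rw [if_neg h.not_ge]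
    exact hv.congr_of_eventuallyEq <| by
      filter_upwards [Ioi_mem_nhds h] with x hx using if_neg hx.not_ge

def approxADeriv (f g : ℝ → ℝ) (A : ℝ) (t : ℝ) : ℝ :=
  if t ≤ A then f t else f A + g A * (t - A)

section ApproxA

variable {φ f g : ℝ → ℝ} {A t : ℝ}

lemma deriv_deriv_eq_of_hasDerivAt (hφ : ∀ t, 0 ≤ t → HasDerivAt φ (f t) t)
    (hf : HasDerivAt f (g A) A) (hA : 0 < A) : deriv (deriv φ) A = g A := by
  have hφf : deriv φ =ᶠ[𝓝 A] f := by
    filter_upwards [Ioi_mem_nhds hA] with x hx using (hφ x hx.le).deriv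
  rw [hφf.deriv_eq, hf.deriv]

lemma approxA_eq_ite (hφ : ∀ t, 0 ≤ t → HasDerivAt φ (f t) t)
    (hf : ∀ t, 0 < t → HasDerivAt f (g t) t) (hA : 0 < A) :
    approxA φ A = fun t => if t ≤ A then φ t else φ A + f A * (t - A) + g A / 2 * (t - A) ^ 2 := by
  funext t
  rw [approxA, (hφ A hA.le).deriv, deriv_deriv_eq_of_hasDerivAt hφ (hf A hA) hA]
  split_ifs
  · rfl
  · ring

lemma hasDerivAt_approxA (hφ : ∀ t, 0 ≤ t → HasDerivAt φ (f t) t)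
    (hf : ∀ t, 0 < t → HasDerivAt f (g t) t) (hA : 0 < A) (ht : 0 ≤ t) :
    HasDerivAt (approxA φ A) (approxADeriv f g A t) t := by
  have hshift := (hasDerivAt_id' t).sub_const A
  have hQ : HasDerivAt (fun x => φ A + f A * (x - A) + g A / 2 * (x - A) ^ 2)
      (f A + g A * (t - A)) t :=
    (((hshift.const_mul (f A)).const_add (φ A)).add ((hshift.pow 2).const_mul (g A / 2))).congr_deriv
      (by ring)
  rw [approxA_eq_ite hφ hf hA]
  exact hasDerivAt_ite_le (hφ t ht) hQ (by simp) (fun h => by simp [h])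

lemma hasDerivAt_approxADeriv (hf : ∀ t, 0 < t → HasDerivAt f (g t) t) (ht : 0 < t) :
    HasDerivAt (approxADeriv f g A) (g (min t A)) t := by
  have hL : HasDerivAt (fun x => f A + g A * (x - A)) (g A) t := by
    simpa using (((hasDerivAt_id' t).sub_const A).const_mul (g A)).const_add (f A)
  rw [min_def, apply_ite g]
  exact hasDerivAt_ite_le (hf t ht) hL (by simp) (fun h => by rw [h])

lemma deriv_approxA (hφ : ∀ t, 0 ≤ t → HasDerivAt φ (f t) t)
    (hf : ∀ t, 0 < t → HasDerivAt f (g t) t) (hA : 0 < A) (ht : 0 ≤ t) :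
    deriv (approxA φ A) t = approxADeriv f g A t :=
  (hasDerivAt_approxA hφ hf hA ht).deriv

lemma deriv_deriv_approxA (hφ : ∀ t, 0 ≤ t → HasDerivAt φ (f t) t)
    (hf : ∀ t, 0 < t → HasDerivAt f (g t) t) (hA : 0 < A) (ht : 0 < t) :
    deriv (deriv (approxA φ A)) t = g (min t A) := by
  have hderiv : deriv (approxA φ A) =ᶠ[𝓝 t] approxADeriv f g A := by
    filter_upwards [Ioi_mem_nhds ht] with x hx using deriv_approxA hφ hf hA hx.le
  rw [hderiv.deriv_eq, (hasDerivAt_approxADeriv hf ht).deriv]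

lemma continuousOn_approxADeriv (hf : ∀ t, 0 < t → HasDerivAt f (g t) t)
    (hfc : ContinuousAt f 0) (hA : 0 < A) : ContinuousOn (approxADeriv f g A) (Ici 0) := by
  intro t ht
  rcases (mem_Ici.mp ht).eq_or_lt with rfl | ht
  · refine (hfc.congr ?_).continuousWithinAt
    filter_upwards [Iio_mem_nhds hA] with x hx using (if_pos hx.le).symm
  · exact (hasDerivAt_approxADeriv hf ht).continuousAt.continuousWithinAt

lemma strictMonoOn_approxADeriv (hf : ∀ t, 0 < t → HasDerivAt f (g t) t)
    (hfc : ContinuousAt f 0) (hg : ∀ t, 0 < t → 0 < g t) (hA : 0 < A) :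
    StrictMonoOn (approxADeriv f g A) (Ici 0) := by
  refine strictMonoOn_of_deriv_pos (convex_Ici 0) (continuousOn_approxADeriv hf hfc hA) ?_
  intro x hx
  rw [interior_Ici] at hx
  rw [(hasDerivAt_approxADeriv hf hx).deriv]
  exact hg _ (lt_min hx hA)

lemma approxADeriv_pos (hf : ∀ t, 0 < t → HasDerivAt f (g t) t) (hfc : ContinuousAt f 0)
    (hf0 : f 0 = 0) (hg : ∀ t, 0 < t → 0 < g t) (hA : 0 < A) (ht : 0 < t) :
    0 < approxADeriv f g A t := by
  have hD0 : approxADeriv f g A 0 = 0 := by rw [approxADeriv, if_pos hA.le, hf0]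
  simpa [hD0] using strictMonoOn_approxADeriv hf hfc hg hA self_mem_Ici ht.le ht

lemma tendsto_approxA_div_atTop (hφ : ∀ t, 0 ≤ t → HasDerivAt φ (f t) t)
    (hf : ∀ t, 0 < t → HasDerivAt f (g t) t) (hgA : 0 < g A) (hA : 0 < A) :
    Tendsto (fun t => approxA φ A t / t) atTop atTop := by
  have hlin : Tendsto (fun t => g A / 2 * t + (f A - g A * A)) atTop atTop :=
    tendsto_atTop_add_const_right _ _ (tendsto_id.const_mul_atTop (by positivity))
  have hrem : Tendsto (fun t => (φ A - f A * A + g A / 2 * A ^ 2) / t) atTop (𝓝 0) :=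
    tendsto_const_nhds.div_atTop tendsto_id
  refine (hlin.atTop_add hrem).congr' ?_
  filter_upwards [eventually_gt_atTop A] with t htA
  have ht0 : t ≠ 0 := by linarith
  simp only [approxA_eq_ite hφ hf hA, if_neg htA.not_ge]
  field_simp
  ring

lemma tendsto_approxA_div_zero (hφ : ∀ t, 0 ≤ t → HasDerivAt φ (f t) t) (hφ0 : φ 0 = 0)
    (hf0 : f 0 = 0) (hA : 0 < A) :
    Tendsto (fun t => approxA φ A t / t) (𝓝[>] 0) (𝓝 0) := by
  have hslope := (hφ 0 le_rfl).tendsto_slope_zero_right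
  rw [hf0] at hslope
  refine hslope.congr' ?_
  filter_upwards [nhdsWithin_le_nhds (Iio_mem_nhds hA)] with t ht
  simp [approxA, if_pos (mem_Iio.mp ht).le, hφ0, div_eq_inv_mul]

theorem isRegularNFunction_approxA (hφ : ∀ t, 0 ≤ t → HasDerivAt φ (f t) t)
    (hf : ∀ t, 0 < t → HasDerivAt f (g t) t) (hφ0 : φ 0 = 0) (hfc : ContinuousAt f 0)
    (hf0 : f 0 = 0) (hgc : ContinuousOn g (Ioi 0)) (hg : ∀ t, 0 < t → 0 < g t) (hA : 0 < A) :
    IsRegularNFunction (approxA φ A) := by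
  have hdiff : ∀ t, 0 ≤ t → HasDerivAt (approxA φ A) (approxADeriv f g A t) t :=
    fun t ht => hasDerivAt_approxA hφ hf hA ht
  have hcont : ContinuousOn (approxA φ A) (Ici 0) :=
    fun t ht => (hdiff t ht).continuousAt.continuousWithinAt
  have hmono : StrictMonoOn (approxA φ A) (Ici 0) := by
    refine strictMonoOn_of_deriv_pos (convex_Ici 0) hcont fun x hx => ?_
    rw [interior_Ici] at hx
    rw [(hdiff x hx.le).deriv]
    exact approxADeriv_pos hf hfc hf0 hg hA hx
  have hF0 : approxA φ A 0 = 0 := by rw [approxA, if_pos hA.le, hφ0]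
  refine
    { continuousOn := hcont
      convexOn := ?_
      pos := fun t ht => by simpa [hF0] using hmono self_mem_Ici ht.le ht
      tendsto_zero := tendsto_approxA_div_zero hφ hφ0 hf0 hA
      tendsto_atTop := tendsto_approxA_div_atTop hφ hf (hg A hA) hA
      diffAt := fun t ht => (hdiff t ht.le).differentiableAt
      deriv_continuousOn := (continuousOn_approxADeriv hf hfc hA).congr
        fun t ht => deriv_approxA hφ hf hA ht
      diffAt2 := fun t ht => ?_
      deriv2_continuousOn := ?_
      deriv2_pos := fun t ht => by
        rw [deriv_deriv_approxA hφ hf hA ht]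
        exact hg _ (lt_min ht hA) }
  · refine MonotoneOn.convexOn_of_deriv (convex_Ici 0) hcont ?_ ?_ <;> rw [interior_Ici]
    · exact fun t ht => (hdiff t (le_of_lt ht)).differentiableAt.differentiableWithinAt
    · intro a ha b hb hab
      rw [deriv_approxA hφ hf hA (le_of_lt ha), deriv_approxA hφ hf hA (le_of_lt hb)]
      exact (strictMonoOn_approxADeriv hf hfc hg hA).monotoneOn
        (mem_Ici.mpr (mem_Ioi.mp ha).le) (mem_Ici.mpr (mem_Ioi.mp hb).le) hab
  · refine ((hasDerivAt_approxADeriv (A := A) hf ht).differentiableAt).congr_of_eventuallyEq ?_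
    filter_upwards [Ioi_mem_nhds ht] with x hx using deriv_approxA hφ hf hA hx.le
  · refine ContinuousOn.congr ?_ fun t ht => deriv_deriv_approxA hφ hf hA ht
    exact hgc.comp (continuous_id.min continuous_const).continuousOn
      fun t ht => lt_min ht hA

lemma approxADeriv_balance {γ₁ γ₂ : ℝ} (hγ₁ : γ₁ ≤ 1) (hγ₂ : 1 ≤ γ₂) (hgA : 0 ≤ g A)
    (hlow : ∀ t, 0 < t → t ≤ A → γ₁ * f t ≤ t * g t)
    (hup : ∀ t, 0 < t → t ≤ A → t * g t ≤ γ₂ * f t) (hA : 0 < A) (ht : 0 < t) :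
    γ₁ * approxADeriv f g A t ≤ t * g (min t A) ∧
      t * g (min t A) ≤ γ₂ * approxADeriv f g A t := by
  rcases le_or_gt t A with htA | htA
  · rw [approxADeriv, if_pos htA, min_eq_left htA]
    exact ⟨hlow t ht htA, hup t ht htA⟩
  · rw [approxADeriv, if_neg htA.not_ge, min_eq_right htA.le]
    have hlowA := hlow A hA le_rfl
    have hupA := hup A hA le_rfl
    have hslope : 0 ≤ g A * (t - A) := mul_nonneg hgA (by linarith)
    constructor <;> nlinarith

theorem isBalanced_approxA {γ₁ γ₂ : ℝ} (hγ₁ : γ₁ ∈ Ioc 0 1) (hγ₂ : 1 ≤ γ₂)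
    (hφ : ∀ t, 0 ≤ t → HasDerivAt φ (f t) t) (hf : ∀ t, 0 < t → HasDerivAt f (g t) t)
    (hφ0 : φ 0 = 0) (hfc : ContinuousAt f 0) (hf0 : f 0 = 0) (hgc : ContinuousOn g (Ioi 0))
    (hg : ∀ t, 0 < t → 0 < g t) (hlow : ∀ t, 0 < t → t ≤ A → γ₁ * f t ≤ t * g t)
    (hup : ∀ t, 0 < t → t ≤ A → t * g t ≤ γ₂ * f t) (hA : 0 < A) :
    IsBalanced (approxA φ A) γ₁ γ₂ := by
  have hbal := fun t (ht : 0 < t) =>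
    approxADeriv_balance hγ₁.2 hγ₂ (hg A hA).le hlow hup hA ht
  refine ⟨isRegularNFunction_approxA hφ hf hφ0 hfc hf0 hgc hg hA, hγ₁, hγ₂, ?_, ?_⟩ <;>
    intro t ht <;>
    rw [deriv_approxA hφ hf hA ht.le, deriv_deriv_approxA hφ hf hA ht]
  exacts [(hbal t ht).1, (hbal t ht).2]

end ApproxA

def omgDeriv (p δ s : ℝ) : ℝ := (δ + s) ^ (p - 2) * s

def omgDeriv2 (p δ s : ℝ) : ℝ := (δ + s) ^ (p - 3) * (δ + (p - 1) * s)

section Omega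

variable {p δ s t : ℝ}

lemma omgDeriv_eq (h : 0 < δ + s) : omgDeriv p δ s = (δ + s) ^ (p - 3) * ((δ + s) * s) := by
  rw [omgDeriv, show p - 2 = p - 3 + 1 by ring, Real.rpow_add_one h.ne']
  ring

lemma continuousAt_omgDeriv (hp : 1 < p) (hδ : 0 ≤ δ) (hs : 0 ≤ s) :
    ContinuousAt (omgDeriv p δ) s := by
  rcases (add_nonneg hδ hs).lt_or_eq with h | h
  · exact ((continuousAt_const.add continuousAt_id).rpow_const (Or.inl h.ne')).mul continuousAt_id
  obtain ⟨rfl, rfl⟩ : δ = 0 ∧ s = 0 := ⟨by linarith, by linarith⟩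
  -- `x ^ (p - 2)` may blow up at `0` (and is `rpow` of a negative base for `x < 0`):
  -- squeeze `omgDeriv` by `|x| ^ (p - 1)` instead
  have hbound : ∀ x, ‖omgDeriv p 0 x‖ ≤ |x| ^ (p - 1) := by
    intro x
    rcases eq_or_ne x 0 with rfl | hx
    · simp [omgDeriv, Real.zero_rpow (by linarith : p - 1 ≠ 0)]
    calc ‖omgDeriv p 0 x‖ = |x ^ (p - 2)| * |x| := by simp [omgDeriv]
      _ ≤ |x| ^ (p - 2) * |x| := by gcongr; exact Real.abs_rpow_le_abs_rpow x _
      _ = |x| ^ (p - 1) := by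
        rw [← Real.rpow_add_one (abs_ne_zero.mpr hx)]
        ring_nf
  have hlim : Tendsto (fun x : ℝ => |x| ^ (p - 1)) (𝓝 0) (𝓝 0) := by
    have := (continuous_abs.continuousAt (x := (0 : ℝ))).rpow_const (p := p - 1)
      (Or.inr (by linarith))
    simpa [Real.zero_rpow (by linarith : p - 1 ≠ 0)] using this.tendsto
  simpa [ContinuousAt, omgDeriv] using squeeze_zero_norm hbound hlim

lemma hasDerivAt_omg (hp : 1 < p) (hδ : 0 ≤ δ) (ht : 0 ≤ t) :
    HasDerivAt (omg p δ) (omgDeriv p δ t) t := by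
  have hcont : ContinuousOn (omgDeriv p δ) (uIcc 0 t) := fun s hs =>
    (continuousAt_omgDeriv hp hδ (by simpa [ht] using hs.1)).continuousWithinAt
  have hmeas : Measurable (omgDeriv p δ) := by unfold omgDeriv; fun_prop
  exact intervalIntegral.integral_hasDerivAt_right hcont.intervalIntegrable
    hmeas.aestronglyMeasurable.stronglyMeasurableAtFilter (continuousAt_omgDeriv hp hδ ht)

lemma hasDerivAt_omgDeriv (hδ : 0 ≤ δ) (ht : 0 < t) :
    HasDerivAt (omgDeriv p δ) (omgDeriv2 p δ t) t := by
  have h : 0 < δ + t := by linarith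
  have hpow := ((hasDerivAt_id' t).const_add δ).rpow_const (p := p - 2) (Or.inl h.ne')
  refine (hpow.mul (hasDerivAt_id' t)).congr_deriv ?_
  rw [omgDeriv2, show p - 2 - 1 = p - 3 by ring, show p - 2 = p - 3 + 1 by ring,
    Real.rpow_add_one h.ne']
  ring

lemma continuousOn_omgDeriv2 (hδ : 0 ≤ δ) : ContinuousOn (omgDeriv2 p δ) (Ioi 0) := by
  intro s hs
  have h : δ + s ≠ 0 := by have : (0 : ℝ) < s := hs; linarith
  exact (((continuousAt_const.add continuousAt_id).rpow_const (Or.inl h)).mul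
    (continuousAt_const.add (continuousAt_const.mul continuousAt_id))).continuousWithinAt

lemma omgDeriv2_pos (hp : 1 < p) (hδ : 0 ≤ δ) (ht : 0 < t) : 0 < omgDeriv2 p δ t := by
  have : 0 < (p - 1) * t := mul_pos (by linarith) ht
  exact mul_pos (Real.rpow_pos_of_pos (by linarith) _) (by linarith)

lemma omgDeriv_balance (hp : p ∈ Ioc (1 : ℝ) 2) (hδ : 0 ≤ δ) (ht : 0 < t) :
    (p - 1) * omgDeriv p δ t ≤ t * omgDeriv2 p δ t ∧ t * omgDeriv2 p δ t ≤ omgDeriv p δ t := by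
  have h : 0 < δ + t := by linarith
  have hpow : 0 ≤ (δ + t) ^ (p - 3) := (Real.rpow_pos_of_pos h _).le
  rw [omgDeriv_eq h, omgDeriv2]
  have h2p : 0 ≤ 2 - p := by linarith [hp.2]
  constructor
  · have : (p - 1) * ((δ + t) * t) ≤ t * (δ + (p - 1) * t) := by
      nlinarith [mul_nonneg (mul_nonneg hδ ht.le) h2p]
    nlinarith [mul_le_mul_of_nonneg_left this hpow]
  · have : t * (δ + (p - 1) * t) ≤ (δ + t) * t := by
      nlinarith [mul_nonneg (mul_nonneg ht.le ht.le) h2p]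
    nlinarith [mul_le_mul_of_nonneg_left this hpow]

end Omega

/-- For `p ∈ (1,2]`, `δ ∈ [0,∞)` and `A ≥ 1`, the `A`-approximation
`ω^A` of `ω = ω_{p,δ}` is a balanced N-function with characteristics `(p−1, 1)`,
i.e. `(p−1)(ω^A)'(t) ≤ t (ω^A)''(t) ≤ (ω^A)'(t)` for all `t > 0`. -/
theorem stmt1 (p δ A : ℝ) (hp : p ∈ Set.Ioc (1:ℝ) 2) (hδ : 0 ≤ δ) (hA : 1 ≤ A) :
    IsBalanced (approxA (omg p δ) A) (p - 1) 1 ∧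
    ∀ t : ℝ, 0 < t →
      (p - 1) * deriv (approxA (omg p δ) A) t ≤ t * deriv (deriv (approxA (omg p δ) A)) t ∧
      t * deriv (deriv (approxA (omg p δ) A)) t ≤ deriv (approxA (omg p δ) A) t := by
  have hbal : IsBalanced (approxA (omg p δ) A) (p - 1) 1 :=
    isBalanced_approxA ⟨by linarith [hp.1], by linarith [hp.2]⟩ le_rfl
      (fun t ht => hasDerivAt_omg hp.1 hδ ht) (fun t ht => hasDerivAt_omgDeriv hδ ht)
      (by simp [omg]) (continuousAt_omgDeriv hp.1 hδ le_rfl) (by simp [omgDeriv])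
      (continuousOn_omgDeriv2 hδ) (fun t ht => omgDeriv2_pos hp.1 hδ ht)
      (fun t ht _ => (omgDeriv_balance hp hδ ht).1)
      (fun t ht _ => (omgDeriv_balance hp hδ ht).2.trans_eq (one_mul _).symm)
      (by linarith)
  exact ⟨hbal, fun t ht => ⟨hbal.lower t ht, by simpa using hbal.upper t ht⟩⟩

end
end

section
/- Let the operator S: ℝ^{3×3} → ℝ^{3×3}_sym, derived from the potential U (i.e. S = ∂U), have (p,δ)-structure for some p ∈ (1,2] and δ > 0, with characteristics (γ₃,γ₄,p). For A ≥ 1 let S^A := ∂(U^A) be the operator derived from the A-approximation U^A. Then there is a constant c depending only on γ₃, γ₄ and p such that |S^A(P)| ≤ c·δ^{p−2}·|P^sym| for all P ∈ ℝ^{3×3}. -/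
open Real Set MeasureTheory Filter Matrix

noncomputable section

abbrev Mat3 := Matrix (Fin 3) (Fin 3) ℝ

/-- The symmetric part `P^sym = (P + Pᵀ)/2`. -/
def symPart (P : Mat3) : Mat3 := (2:ℝ)⁻¹ • (P + Pᵀ)

/-- Frobenius norm of a 3×3 matrix. -/
def frob (P : Mat3) : ℝ := Real.sqrt (∑ i, ∑ j, (P i j) ^ 2)

/-- Scalar product of matrices `P·Q = Σ_{ij} P_{ij} Q_{ij}`. -/
def dot3 (P Q : Mat3) : ℝ := ∑ i, ∑ j, P i j * Q i j

attribute [local instance] Matrix.frobeniusNormedAddCommGroup Matrix.frobeniusNormedSpace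

/-- `U` is an admissible potential: `U ∈ C¹([0,∞)) ∩ C²((0,∞))` with `U(0) = U'(0) = 0`. -/
structure IsPotential (U : ℝ → ℝ) : Prop where
  continuousOn : ContinuousOn U (Set.Ici 0)
  diffAt : ∀ t : ℝ, 0 < t → DifferentiableAt ℝ U t
  deriv_continuousOn : ContinuousOn (deriv U) (Set.Ici 0)
  diffAt2 : ∀ t : ℝ, 0 < t → DifferentiableAt ℝ (deriv U) t
  deriv2_continuousOn : ContinuousOn (deriv (deriv U)) (Set.Ioi 0)
  zero : U 0 = 0
  deriv_zero : deriv U 0 = 0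

/-- `S` is derived from the potential `U`, i.e. `S = ∂U`:
`S(0) = 0` and `S(P) = (U'(|P^sym|)/|P^sym|) P^sym`.  (When `P^sym = 0` the right-hand
side is `0` since it is a scalar multiple of the zero matrix.) -/
def DerivedFrom (S : Mat3 → Mat3) (U : ℝ → ℝ) : Prop :=
  S 0 = 0 ∧ ∀ P : Mat3,
    S P = (deriv U (frob (symPart P)) / frob (symPart P)) • symPart P

/-- The operator derived from the potential `U^A` (the `A`-approximation of `U`),
i.e. `S^A = ∂(U^A)`. -/
def SAop (U : ℝ → ℝ) (A : ℝ) (P : Mat3) : Mat3 :=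
  (deriv (approxA U A) (frob (symPart P)) / frob (symPart P)) • symPart P

/-- `S` has `(p,δ)`-structure with characteristics `(γ₃, γ₄, p)`. -/
structure HasPDeltaStructure (S : Mat3 → Mat3) (p δ γ₃ γ₄ : ℝ) : Prop where
  gamma3_mem : γ₃ ∈ Set.Ioc (0:ℝ) 1
  gamma4_gt : 1 < γ₄
  sym_dep : ∀ P : Mat3, S P = S (symPart P)
  sym_val : ∀ P : Mat3, (S P)ᵀ = S P
  zero : S 0 = 0
  cont : Continuous S
  smooth : ContDiffOn ℝ 1 S {P : Mat3 | P ≠ 0}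
  coercive : ∀ P Q : Mat3, symPart P ≠ 0 →
    γ₃ * (δ + frob (symPart P)) ^ (p - 2) * frob (symPart Q) ^ 2 ≤
      ∑ i, ∑ j, ∑ k, ∑ l,
        fderiv ℝ S P (Matrix.single k l 1) i j * Q i j * Q k l
  bounded : ∀ P : Mat3, symPart P ≠ 0 → ∀ i j k l : Fin 3,
    |fderiv ℝ S P (Matrix.single k l 1) i j| ≤ γ₄ * (δ + frob (symPart P)) ^ (p - 2)

/-! Along the ray `r ↦ r • e₀₀` (with `e₀₀` the matrix unit at `(0,0)`) the relation `S = ∂U` reads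
`S (r • e₀₀) 0 0 = U'(r)`, so `U''(r)` is an entry of `DS(r • e₀₀)` and the `(p,δ)`-structure
gives `|U''(r)| ≤ γ₄ (δ + r)^(p-2) ≤ γ₄ δ^(p-2)` because `p ≤ 2`. Since `U'(0) = 0`, the mean
value theorem yields `|U'(t)| ≤ γ₄ δ^(p-2) t`. The derivative of `U^A` is `U'` on `[0, A]` and
the tangent line `U'(A) + U''(A)(t - A)` beyond, so it obeys the same linear bound, and
`|S^A(P)| = |(U^A)'(|P^sym|)|`. -/

lemma abs_le_mul_of_abs_deriv_le {f : ℝ → ℝ} {K t : ℝ} (hf : ContinuousOn f (Ici 0))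
    (hf0 : f 0 = 0) (hdiff : ∀ s, 0 < s → DifferentiableAt ℝ f s)
    (hbound : ∀ s, 0 < s → |deriv f s| ≤ K) (ht : 0 < t) : |f t| ≤ K * t := by
  obtain ⟨c, hc, hslope⟩ := exists_deriv_eq_slope f ht (hf.mono Icc_subset_Ici_self)
    fun s hs => (hdiff s hs.1).differentiableWithinAt
  rw [hf0, sub_zero, sub_zero, eq_div_iff ht.ne'] at hslope
  rw [← hslope, abs_mul, abs_of_pos ht]
  exact mul_le_mul_of_nonneg_right (hbound c hc.1) ht.le

lemma deriv_approxA_s9 {φ : ℝ → ℝ} {A : ℝ} (hφ : DifferentiableAt ℝ φ A) (t : ℝ) :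
    deriv (approxA φ A) t =
      if t ≤ A then deriv φ t else deriv φ A + deriv (deriv φ) A * (t - A) := by
  set a := deriv φ A
  set b := deriv (deriv φ) A
  set q : ℝ → ℝ := fun t =>
    1 / 2 * b * t ^ 2 + (a - b * A) * t + (φ A - a * A + 1 / 2 * b * A ^ 2)
  have hq : ∀ s, HasDerivAt q (a + b * (s - A)) s := fun s => by
    refine ((((hasDerivAt_pow 2 s).const_mul (1 / 2 * b)).add
      ((hasDerivAt_id' s).const_mul (a - b * A))).add_const _).congr_deriv ?_
    norm_num
    ring
  rcases lt_trichotomy t A with htA | rfl | htA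
  · rw [if_pos htA.le]
    refine Filter.EventuallyEq.deriv_eq ?_
    filter_upwards [Iio_mem_nhds htA] with s hs
    exact if_pos (le_of_lt hs)
  · rw [if_pos le_rfl]
    have hleft : HasDerivWithinAt (approxA φ t) a (Iic t) t :=
      hφ.hasDerivAt.hasDerivWithinAt.congr (fun s hs => if_pos hs) (if_pos le_rfl)
    have hright : HasDerivWithinAt (approxA φ t) a (Ici t) t := by
      refine ((hq t).hasDerivWithinAt.congr (fun s hs => ?_) ?_).congr_deriv (by ring)
      · rcases (mem_Ici.mp hs).eq_or_lt with rfl | hst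
        · simp only [approxA, le_refl, if_pos, q]; ring
        · exact if_neg (not_le.mpr hst)
      · simp only [approxA, le_refl, if_pos, q]; ring
    have hboth := hleft.union hright
    rw [Iic_union_Ici, hasDerivWithinAt_univ] at hboth
    exact hboth.deriv
  · rw [if_neg (not_le.mpr htA)]
    refine ((hq t).congr_of_eventuallyEq ?_).deriv
    filter_upwards [Ioi_mem_nhds htA] with s hs
    exact if_neg (not_le.mpr hs)

lemma abs_deriv_approxA_le {φ : ℝ → ℝ} {A K t : ℝ} (hA : 0 < A)
    (hφ : DifferentiableAt ℝ φ A) (hφ' : ∀ s, 0 < s → |deriv φ s| ≤ K * s)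
    (hφ'' : |deriv (deriv φ) A| ≤ K) (ht : 0 < t) :
    |deriv (approxA φ A) t| ≤ K * t := by
  rw [deriv_approxA_s9 hφ]
  split_ifs with htA
  · exact hφ' t ht
  · have htA' : 0 < t - A := sub_pos.mpr (not_le.mp htA)
    calc |deriv φ A + deriv (deriv φ) A * (t - A)|
          ≤ |deriv φ A| + |deriv (deriv φ) A| * (t - A) :=
            (abs_add_le _ _).trans_eq (by rw [abs_mul, abs_of_pos htA'])
        _ ≤ K * A + K * (t - A) := by
            gcongr
            exact hφ' A hA
        _ = K * t := by ring

lemma frob_smul (r : ℝ) (M : Mat3) : frob (r • M) = |r| * frob M := by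
  rw [frob, frob, ← Real.sqrt_sq_eq_abs, ← Real.sqrt_mul (sq_nonneg r), Finset.mul_sum]
  simp only [Finset.mul_sum, Matrix.smul_apply, smul_eq_mul, mul_pow]

def e₀₀ : Mat3 := Matrix.single 0 0 1

lemma symPart_smul_e₀₀ (r : ℝ) : symPart (r • e₀₀) = r • e₀₀ := by
  rw [symPart, transpose_smul, e₀₀, transpose_single, ← two_smul ℝ, smul_smul,
    inv_mul_cancel₀ two_ne_zero, one_smul]

lemma frob_e₀₀ : frob e₀₀ = 1 := by
  simp [frob, e₀₀, Matrix.single_apply, ite_pow, Fin.sum_univ_three, Finset.filter_eq]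

lemma frob_smul_e₀₀ (r : ℝ) : frob (r • e₀₀) = |r| := by
  rw [frob_smul, frob_e₀₀, mul_one]

lemma smul_e₀₀_ne_zero {r : ℝ} (hr : r ≠ 0) : r • e₀₀ ≠ 0 := by
  intro h
  exact hr (by simpa [e₀₀] using congr_fun (congr_fun h 0) 0)

lemma hasDerivAt_apply_smul {S : Mat3 → Mat3} {v : Mat3} {r : ℝ}
    (hS : DifferentiableAt ℝ S (r • v)) (i j : Fin 3) :
    HasDerivAt (fun s : ℝ => S (s • v) i j) (fderiv ℝ S (r • v) v i j) r := by
  let entry : Mat3 →L[ℝ] ℝ := LinearMap.toContinuousLinearMap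
    { toFun := fun M => M i j, map_add' := fun _ _ => rfl, map_smul' := fun _ _ => rfl }
  have hray := (hasDerivAt_id r).smul_const v
  simp only [one_smul] at hray
  exact entry.hasFDerivAt.comp_hasDerivAt r (hS.hasFDerivAt.comp_hasDerivAt r hray)

namespace DerivedFrom

variable {S : Mat3 → Mat3} {U : ℝ → ℝ}

lemma apply_smul_e₀₀ (hD : DerivedFrom S U) {r : ℝ} (hr : 0 < r) :
    S (r • e₀₀) 0 0 = deriv U r := by
  rw [hD.2, symPart_smul_e₀₀, frob_smul_e₀₀, abs_of_pos hr]
  simp [e₀₀, hr.ne']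

lemma hasDerivAt_deriv (hD : DerivedFrom S U) {r : ℝ} (hr : 0 < r)
    (hS : DifferentiableAt ℝ S (r • e₀₀)) :
    HasDerivAt (deriv U) (fderiv ℝ S (r • e₀₀) e₀₀ 0 0) r := by
  refine (hasDerivAt_apply_smul hS 0 0).congr_of_eventuallyEq ?_
  filter_upwards [Ioi_mem_nhds hr] with s hs
  exact (hD.apply_smul_e₀₀ hs).symm

end DerivedFrom

namespace HasPDeltaStructure

variable {S : Mat3 → Mat3} {p δ γ₃ γ₄ : ℝ}

lemma differentiableAt (hS : HasPDeltaStructure S p δ γ₃ γ₄) {P : Mat3} (hP : P ≠ 0) :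
    DifferentiableAt ℝ S P :=
  (hS.smooth.contDiffAt (isOpen_ne.mem_nhds hP)).differentiableAt one_ne_zero

lemma abs_deriv_deriv_le {U : ℝ → ℝ} (hS : HasPDeltaStructure S p δ γ₃ γ₄)
    (hD : DerivedFrom S U) {r : ℝ} (hr : 0 < r) :
    |deriv (deriv U) r| ≤ γ₄ * (δ + r) ^ (p - 2) := by
  have hne : r • e₀₀ ≠ 0 := smul_e₀₀_ne_zero hr.ne'
  have hbound := hS.bounded (r • e₀₀) (by rwa [symPart_smul_e₀₀]) 0 0 0 0
  rw [symPart_smul_e₀₀, frob_smul_e₀₀, abs_of_pos hr] at hbound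
  rw [(hD.hasDerivAt_deriv hr (hS.differentiableAt hne)).deriv]
  exact hbound

end HasPDeltaStructure

/-- Let `S = ∂U` have `(p,δ)`-structure with characteristics
`(γ₃,γ₄,p)`, `p ∈ (1,2]`, `δ > 0`, and let `S^A = ∂(U^A)` for `A ≥ 1`. Then there is a
constant `c` depending only on `γ₃, γ₄, p` such that
`|S^A(P)| ≤ c δ^{p−2} |P^sym|` for all `P`. -/
theorem stmt9 (p γ₃ γ₄ : ℝ) (hp : p ∈ Set.Ioc (1:ℝ) 2) :
    ∃ c : ℝ, 0 < c ∧
      ∀ (δ A : ℝ) (U : ℝ → ℝ) (S : Mat3 → Mat3), 0 < δ → 1 ≤ A →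
        IsPotential U → DerivedFrom S U → HasPDeltaStructure S p δ γ₃ γ₄ →
        ∀ P : Mat3, frob (SAop U A P) ≤ c * δ ^ (p - 2) * frob (symPart P) := by
  -- `γ₄ > 1` is only known once `S` is given, hence the `max`.
  refine ⟨max γ₄ 1, by positivity, fun δ A U S hδ hA hU hD hS P => ?_⟩
  set K := γ₄ * δ ^ (p - 2) with hK
  have hU'' : ∀ r, 0 < r → |deriv (deriv U) r| ≤ K := fun r hr =>
    (hS.abs_deriv_deriv_le hD hr).trans <| mul_le_mul_of_nonneg_left
      (Real.rpow_le_rpow_of_nonpos hδ (by linarith) (by linarith [hp.2]))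
      (by linarith [hS.gamma4_gt])
  have hU' : ∀ s, 0 < s → |deriv U s| ≤ K * s := fun s hs =>
    abs_le_mul_of_abs_deriv_le hU.deriv_continuousOn hU.deriv_zero hU.diffAt2 hU'' hs
  have ht0 : 0 ≤ frob (symPart P) := Real.sqrt_nonneg _
  rw [SAop, frob_smul]
  generalize frob (symPart P) = t at ht0 ⊢
  rcases ht0.eq_or_lt with rfl | ht
  · simp
  calc |deriv (approxA U A) t / t| * t = |deriv (approxA U A) t| := by
        rw [abs_div, abs_of_pos ht, div_mul_cancel₀ _ ht.ne']
    _ ≤ K * t := abs_deriv_approxA_le (by linarith) (hU.diffAt A (by linarith)) hU'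
        (hU'' A (by linarith)) ht
    _ ≤ max γ₄ 1 * δ ^ (p - 2) * t := by
        rw [hK]
        gcongr
        exact le_max_left _ _

end
end
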